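/- Let T be an ℕ-graded ring with grading 𝒜 : ℕ → AddSubgroup T, and let A be a right ideal of T whose right annihilator A^r is non-zero. If A^r contains a non-zero element y of positive amplitude a, then A^r also contains a non-zero element z of amplitude strictly less than a. -/
import Mathlib


/-- `IsCanonicalForm 𝒜 z ℓ u` says that the non-zero element `z` of the `ℕ`-graded ring `T`
has lower degree `ℓ` and upper degree `u`: the components `z_ℓ` and `z_u` are non-zero,
and every non-zero component `z_j` satisfies `ℓ ≤ j ≤ u`.  The amplitude of `z` is `u - ℓ`. -/
def IsCanonicalForm {T : Type*} [Ring T] (𝒜 : ℕ → AddSubgroup T) [GradedRing 𝒜]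
    (z : T) (ℓ u : ℕ) : Prop :=
  ℓ ≤ u ∧ (DirectSum.decompose 𝒜 z ℓ : T) ≠ 0 ∧ (DirectSum.decompose 𝒜 z u : T) ≠ 0 ∧
    ∀ j : ℕ, (DirectSum.decompose 𝒜 z j : T) ≠ 0 → ℓ ≤ j ∧ j ≤ u

/-- Every nonzero element has a canonical form. -/
lemma exists_isCanonicalForm {T : Type*} [Ring T] (𝒜 : ℕ → AddSubgroup T) [GradedRing 𝒜]
    (z : T) (hz : z ≠ 0) : ∃ ℓ u : ℕ, IsCanonicalForm 𝒜 z ℓ u := by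
  classical
  set s := (DirectSum.decompose 𝒜 z).support with hs
  have hmem : ∀ j, j ∈ s ↔ (DirectSum.decompose 𝒜 z j : T) ≠ 0 := by
    intro j
    rw [hs, DFinsupp.mem_support_iff]
    simp [ZeroMemClass.coe_eq_zero]
  have hne : s.Nonempty := by
    by_contra h
    rw [Finset.not_nonempty_iff_eq_empty] at h
    have := DirectSum.sum_support_decompose 𝒜 z
    rw [← hs, h, Finset.sum_empty] at this
    exact hz this.symm
  refine ⟨s.min' hne, s.max' hne, s.min'_le _ (s.max'_mem hne), ?_, ?_, ?_⟩
  · exact (hmem _).mp (s.min'_mem hne)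
  · exact (hmem _).mp (s.max'_mem hne)
  · intro j hj
    exact ⟨s.min'_le j ((hmem j).mpr hj), s.le_max' j ((hmem j).mpr hj)⟩


/-- Let `T` be an `ℕ`-graded ring and `A` a right ideal of `T`.  If the right annihilator
of `A` contains a non-zero element `y` of positive amplitude `u - ℓ`, then it also contains
a non-zero element `z` of amplitude strictly smaller than that of `y`. -/
theorem exists_annihilator_of_smaller_amplitude
    {T : Type*} [Ring T] (𝒜 : ℕ → AddSubgroup T) [GradedRing 𝒜]
    (A : AddSubgroup T) (hA : ∀ a ∈ A, ∀ t : T, a * t ∈ A)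
    (y : T) (hy : y ≠ 0) (hyann : ∀ a ∈ A, a * y = 0)
    (ℓ u : ℕ) (hform : IsCanonicalForm 𝒜 y ℓ u) (hamp : 0 < u - ℓ) :
    ∃ z : T, z ≠ 0 ∧ (∀ a ∈ A, a * z = 0) ∧
      ∃ ℓ' u' : ℕ, IsCanonicalForm 𝒜 z ℓ' u' ∧ u' - ℓ' < u - ℓ := by
  classical
  obtain ⟨hlu, hyl, hyu, hbound⟩ := hform
  have hyhigh : ∀ j, u < j → (DirectSum.decompose 𝒜 y j : T) = 0 := by
    intro j hj
    by_contra h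
    exact absurd (hbound j h).2 (not_le.mpr hj)
  by_cases H : ∃ i : ℕ, ∃ t ∈ 𝒜 i, t * (DirectSum.decompose 𝒜 y u : T) = 0 ∧ t * y ≠ 0
  · -- Case: a homogeneous t kills the top component but not y.  Take z = t * y.
    obtain ⟨i, t, hti, htu, hty⟩ := H
    refine ⟨t * y, hty, ?_, ?_⟩
    · intro a ha
      rw [← mul_assoc]
      exact hyann _ (hA a ha t)
    · have hcomp : ∀ k, (DirectSum.decompose 𝒜 (t * y) k : T) ≠ 0 →
          i + ℓ ≤ k ∧ k ≤ i + u ∧ k ≠ i + u := by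
        intro k hk
        by_cases hik : i ≤ k
        · rw [DirectSum.coe_decompose_mul_of_left_mem_of_le 𝒜 hti hik] at hk
          have hyk : (DirectSum.decompose 𝒜 y (k - i) : T) ≠ 0 := by
            intro h0; rw [h0, mul_zero] at hk; exact hk rfl
          have hb := hbound _ hyk
          have hne : k - i ≠ u := by
            intro h0; rw [h0, htu] at hk; exact hk rfl
          omega
        · rw [DirectSum.coe_decompose_mul_of_left_mem_of_not_le 𝒜 hti hik] at hk
          exact absurd rfl hk
      obtain ⟨ℓ', u', hcf⟩ := exists_isCanonicalForm 𝒜 (t * y) hty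
      refine ⟨ℓ', u', hcf, ?_⟩
      obtain ⟨h1, h2, h3, _⟩ := hcf
      have hl' := hcomp ℓ' h2
      have hu' := hcomp u' h3
      omega
  · -- Case: every homogeneous t killing the top component kills y.
    push_neg at H
    -- key: top-component computation
    have key1 : ∀ (n : ℕ) (a : T), (∀ j, n < j → (DirectSum.decompose 𝒜 a j : T) = 0) →
        a * y = 0 → (DirectSum.decompose 𝒜 a n : T) * (DirectSum.decompose 𝒜 y u : T) = 0 := by
      intro n a hhigh hay
      have h0 : (GradedRing.proj 𝒜 (n + u)) (a * y) = 0 := by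
        rw [hay, map_zero]
      have h1 : (GradedRing.proj 𝒜 (n + u)) (a * y) =
          ∑ k ∈ (DirectSum.decompose 𝒜 a).support,
            (GradedRing.proj 𝒜 (n + u)) ((DirectSum.decompose 𝒜 a k : T) * y) := by
        conv_lhs => rw [← DirectSum.sum_support_decompose 𝒜 a]
        rw [Finset.sum_mul, map_sum]
      have h2 : ∀ k ∈ (DirectSum.decompose 𝒜 a).support, k ≠ n →
          (GradedRing.proj 𝒜 (n + u)) ((DirectSum.decompose 𝒜 a k : T) * y) = 0 := by
        intro k hk hkn
        rcases lt_or_gt_of_ne hkn with hlt | hgt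
        · rw [GradedRing.proj_apply,
            DirectSum.coe_decompose_mul_of_left_mem_of_le 𝒜 (SetLike.coe_mem _) (by omega),
            hyhigh (n + u - k) (by omega), mul_zero]
        · rw [hhigh k hgt, zero_mul, map_zero]
      have h3 : (GradedRing.proj 𝒜 (n + u)) ((DirectSum.decompose 𝒜 a n : T) * y) =
          (DirectSum.decompose 𝒜 a n : T) * (DirectSum.decompose 𝒜 y u : T) := by
        rw [GradedRing.proj_apply,
          DirectSum.coe_decompose_mul_of_left_mem_of_le 𝒜 (SetLike.coe_mem _) (Nat.le_add_right n u),
          show n + u - n = u from by omega]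
      rw [h1, Finset.sum_eq_single n h2 ?_] at h0
      · rw [h3] at h0; exact h0
      · intro hn
        rw [DFinsupp.notMem_support_iff] at hn
        rw [show (DirectSum.decompose 𝒜 a n : T) = 0 by rw [hn]; rfl, zero_mul, map_zero]
    -- all homogeneous components of an annihilating element annihilate y
    have key2 : ∀ (n : ℕ) (a : T), (∀ j, n ≤ j → (DirectSum.decompose 𝒜 a j : T) = 0) →
        a * y = 0 → ∀ i, (DirectSum.decompose 𝒜 a i : T) * y = 0 := by
      intro n
      induction n with
      | zero => intro a h _ i; rw [h i (Nat.zero_le i), zero_mul]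
      | succ n ih =>
        intro a h hay i
        have hn : (DirectSum.decompose 𝒜 a n : T) * (DirectSum.decompose 𝒜 y u : T) = 0 :=
          key1 n a (fun j hj => h j (by omega)) hay
        have hany : (DirectSum.decompose 𝒜 a n : T) * y = 0 :=
          H n _ (SetLike.coe_mem _) hn
        set a' := a - (DirectSum.decompose 𝒜 a n : T) with ha'
        have hproj : ∀ j, (DirectSum.decompose 𝒜 a' j : T) =
            (DirectSum.decompose 𝒜 a j : T) -
              (DirectSum.decompose 𝒜 (DirectSum.decompose 𝒜 a n : T) j : T) := by
          intro j
          rw [← GradedRing.proj_apply, ← GradedRing.proj_apply, ← GradedRing.proj_apply,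
            ha', map_sub]
        have ha'high : ∀ j, n ≤ j → (DirectSum.decompose 𝒜 a' j : T) = 0 := by
          intro j hj
          rw [hproj]
          rcases eq_or_lt_of_le hj with heq | hlt
          · rw [← heq, DirectSum.decompose_of_mem_same 𝒜 (SetLike.coe_mem _), sub_self]
          · rw [h j (by omega), DirectSum.decompose_of_mem_ne 𝒜 (SetLike.coe_mem _) (by omega),
              sub_zero]
        have ha'y : a' * y = 0 := by
          rw [ha', sub_mul, hay, hany, sub_zero]
        have := ih a' ha'high ha'y i
        have heq : (DirectSum.decompose 𝒜 a i : T) =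
            (DirectSum.decompose 𝒜 a' i : T) +
              (DirectSum.decompose 𝒜 (DirectSum.decompose 𝒜 a n : T) i : T) := by
          rw [hproj, sub_add_cancel]
        rw [heq, add_mul, this, zero_add]
        by_cases hni : n = i
        · rw [← hni, DirectSum.decompose_of_mem_same 𝒜 (SetLike.coe_mem _)]
          exact hany
        · rw [DirectSum.decompose_of_mem_ne 𝒜 (SetLike.coe_mem _) hni, zero_mul]
    -- hence every a ∈ A kills y_ℓ
    have hkill : ∀ a ∈ A, a * (DirectSum.decompose 𝒜 y ℓ : T) = 0 := by
      intro a ha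
      have hay := hyann a ha
      have hcomps : ∀ i, (DirectSum.decompose 𝒜 a i : T) * y = 0 := by
        refine key2 ((DirectSum.decompose 𝒜 a).support.sup id + 1) a ?_ hay
        intro j hj
        have : j ∉ (DirectSum.decompose 𝒜 a).support := by
          intro hmem
          have := Finset.le_sup (f := id) hmem
          simp only [id] at this
          omega
        rw [DFinsupp.notMem_support_iff] at this
        rw [this]; rfl
      have hcompl : ∀ i, (DirectSum.decompose 𝒜 a i : T) *
          (DirectSum.decompose 𝒜 y ℓ : T) = 0 := by
        intro i
        have := congrArg (GradedRing.proj 𝒜 (i + ℓ)) (hcomps i)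
        rw [map_zero, GradedRing.proj_apply,
          DirectSum.coe_decompose_mul_of_left_mem_of_le 𝒜 (SetLike.coe_mem _) (by omega)] at this
        rw [show i + ℓ - i = ℓ by omega] at this
        exact this
      conv_lhs => rw [← DirectSum.sum_support_decompose 𝒜 a]
      rw [Finset.sum_mul]
      exact Finset.sum_eq_zero fun k _ => hcompl k
    refine ⟨(DirectSum.decompose 𝒜 y ℓ : T), hyl, hkill, ℓ, ℓ, ⟨le_refl ℓ, ?_, ?_, ?_⟩, by omega⟩
    · rw [DirectSum.decompose_of_mem_same 𝒜 (SetLike.coe_mem _)]; exact hyl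
    · rw [DirectSum.decompose_of_mem_same 𝒜 (SetLike.coe_mem _)]; exact hyl
    · intro j hj
      by_contra hc
      push_neg at hc
      rw [DirectSum.decompose_of_mem_ne 𝒜 (SetLike.coe_mem _) (by omega)] at hj
      exact hj rfl
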